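/- arXiv:2502.01127 — 5 statements merged into one kernel-verified Lean document; each statement's English description precedes it below -/
import Mathlib

section
/- For every player i ∈ {1,...,n}, every joint action x = (x_1,...,x_n) ∈ (ℝ^d)^n, and every alternative action y ∈ ℝ^d, the loss difference equals the potential difference: ℓ_i(x_i, x_{−i}) − ℓ_i(y, x_{−i}) = φ(x_i, x_{−i}) − φ(y, x_{−i}). Hence the Battling Influencers Game is an exact potential game with potential φ. -/
open scoped RealInnerProductSpace

noncomputable section

/-- Player `i`'s loss in the Battling Influencers Game:
`ℓ_i(x) = ‖w_0 x_0 + ∑_{j=1}^n w_j x_j − t_i‖₂²`. -/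
def loss {d n : ℕ} (w0 : ℝ) (x0 : EuclideanSpace ℝ (Fin d)) (w : Fin n → ℝ)
    (t : Fin n → EuclideanSpace ℝ (Fin d)) (i : Fin n)
    (x : Fin n → EuclideanSpace ℝ (Fin d)) : ℝ :=
  ‖w0 • x0 + (∑ j, w j • x j) - t i‖ ^ 2

/-- The potential function
`φ(x) = ‖∑_{j=0}^n w_j x_j‖₂² − 2 ∑_{j=1}^n w_j ⟨t_j, x_j⟩`. -/
def potential {d n : ℕ} (w0 : ℝ) (x0 : EuclideanSpace ℝ (Fin d)) (w : Fin n → ℝ)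
    (t : Fin n → EuclideanSpace ℝ (Fin d))
    (x : Fin n → EuclideanSpace ℝ (Fin d)) : ℝ :=
  ‖w0 • x0 + (∑ j, w j • x j)‖ ^ 2 - 2 * ∑ j, w j * ⟪t j, x j⟫

/-! Both differences are quadratic in the aggregate `s = w₀x₀ + ∑ wⱼxⱼ`, which a deviation of
player `i` from `xᵢ` to `y` shifts by `v = wᵢ(y − xᵢ)`. Expanding the squares, the quadratic
terms `‖v‖²` and the cross terms `⟪s, v⟫` agree, and the remaining `2⟪tᵢ, v⟫` of the loss is
exactly the change in the linear part `−2 ∑ wⱼ⟪tⱼ, xⱼ⟫` of the potential. -/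

theorem Fintype.sum_apply_update {ι α M : Type*} [Fintype ι] [DecidableEq ι] [AddCommGroup M]
    (g : ι → α → M) (x : ι → α) (i : ι) (y : α) :
    ∑ j, g j (Function.update x i y j) = ∑ j, g j (x j) + (g i y - g i (x i)) := by
  simp only [Function.apply_update g x i y,
    Finset.sum_update_of_mem (Finset.mem_univ i),
    Finset.sum_eq_add_sum_sdiff_singleton_of_mem (Finset.mem_univ i) fun j => g j (x j)]
  abel

theorem norm_sub_sq_sub_norm_add_sub_sq {E : Type*} [NormedAddCommGroup E]
    [InnerProductSpace ℝ E] (s t v : E) :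
    ‖s - t‖ ^ 2 - ‖s + v - t‖ ^ 2 = ‖s‖ ^ 2 - ‖s + v‖ ^ 2 + 2 * ⟪t, v⟫ := by
  rw [show s + v - t = (s - t) + v by abel, norm_add_sq_real, norm_add_sq_real, inner_sub_left]
  ring

/-- The Battling Influencers Game is an exact potential game with potential `φ`:
for every player `i`, profile `x`, and deviation `y`,
`ℓ_i(x_i, x_{−i}) − ℓ_i(y, x_{−i}) = φ(x_i, x_{−i}) − φ(y, x_{−i})`. -/
theorem big_exact_potential {d n : ℕ} (w0 : ℝ) (x0 : EuclideanSpace ℝ (Fin d))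
    (w : Fin n → ℝ) (t : Fin n → EuclideanSpace ℝ (Fin d)) (i : Fin n)
    (x : Fin n → EuclideanSpace ℝ (Fin d)) (y : EuclideanSpace ℝ (Fin d)) :
    loss w0 x0 w t i x - loss w0 x0 w t i (Function.update x i y)
      = potential w0 x0 w t x - potential w0 x0 w t (Function.update x i y) := by
  have hsum : ∑ j, w j • Function.update x i y j = ∑ j, w j • x j + w i • (y - x i) := by
    rw [smul_sub]
    exact Fintype.sum_apply_update (fun j z => w j • z) x i y
  have hinner : ∑ j, w j * ⟪t j, Function.update x i y j⟫
      = ∑ j, w j * ⟪t j, x j⟫ + (w i * ⟪t i, y⟫ - w i * ⟪t i, x i⟫) :=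
    Fintype.sum_apply_update (fun j z => w j * ⟪t j, z⟫) x i y
  rw [loss, loss, potential, potential, hsum, hinner, ← add_assoc,
    norm_sub_sq_sub_norm_add_sub_sq, real_inner_smul_right, inner_sub_right]
  ring

end
end

section
/- Let 𝒳 ⊆ ℝ^d be a convex set. A profile x ∈ 𝒳^n is a pure Nash equilibrium of the Battling Influencers Game if and only if x minimizes the potential φ over 𝒳^n, i.e., φ(x) ≤ φ(y) for all y ∈ 𝒳^n. In other words, the set of pure Nash equilibria equals argmin_{x ∈ 𝒳^n} φ(x). -/
/-!
The game is an exact potential game: a unilateral deviation of player `i` changes `φ` by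
exactly the change in `ℓ_i`, so minimizers of `φ` are equilibria. Conversely, `φ(y) - φ(x)` is
a square plus the first-order term `∑_j ⟪∇_j φ(x), y_j - x_j⟫`. At an equilibrium each `x_i`
minimizes `z ↦ φ(x_{-i}, z)` over the convex set `𝒳`; moving `x_i` a distance `ε` towards
`z ∈ 𝒳` changes `φ` by `O(ε²) + ε ⟪∇_i φ(x), z - x_i⟫`, so each first-order term is
nonnegative and `φ(x) ≤ φ(y)`.
-/

open scoped RealInnerProductSpace

noncomputable section

/-- A pure Nash equilibrium of the Battling Influencers Game with common action
set `X`: every player plays in `X` and no player can strictly decrease its own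
loss by a unilateral deviation inside `X`. -/
def IsPureNE {d n : ℕ} (X : Set (EuclideanSpace ℝ (Fin d))) (w0 : ℝ)
    (x0 : EuclideanSpace ℝ (Fin d)) (w : Fin n → ℝ)
    (t : Fin n → EuclideanSpace ℝ (Fin d))
    (x : Fin n → EuclideanSpace ℝ (Fin d)) : Prop :=
  (∀ i, x i ∈ X) ∧
    ∀ i, ∀ y ∈ X, loss w0 x0 w t i x ≤ loss w0 x0 w t i (Function.update x i y)

theorem Convex.inner_sub_nonneg_of_forall_quadratic_nonneg {E : Type*}
    [NormedAddCommGroup E] [InnerProductSpace ℝ E] {X : Set E} (hX : Convex ℝ X) {x : E}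
    (hx : x ∈ X) (a : ℝ) (g : E) (h : ∀ z ∈ X, 0 ≤ a * ‖z - x‖ ^ 2 + ⟪g, z - x⟫) :
    ∀ z ∈ X, 0 ≤ ⟪g, z - x⟫ := by
  intro z hz
  have hseg : ∀ ε ∈ Set.Ioc (0 : ℝ) 1, 0 ≤ a * ε * ‖z - x‖ ^ 2 + ⟪g, z - x⟫ := by
    rintro ε ⟨hε0, hε1⟩
    have hmem := hX.add_smul_sub_mem hx hz ⟨hε0.le, hε1⟩
    have key := h _ hmem
    rw [add_sub_cancel_left, norm_smul, real_inner_smul_right, Real.norm_of_nonneg hε0.le]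
      at key
    nlinarith
  have hlim : Filter.Tendsto (fun ε : ℝ => a * ε * ‖z - x‖ ^ 2 + ⟪g, z - x⟫)
      (nhdsWithin 0 (Set.Ioi 0)) (nhds ⟪g, z - x⟫) := by
    refine tendsto_nhdsWithin_of_tendsto_nhds ?_
    have : Continuous (fun ε : ℝ => a * ε * ‖z - x‖ ^ 2 + ⟪g, z - x⟫) := by fun_prop
    simpa using this.tendsto 0
  exact ge_of_tendsto hlim (Filter.mem_of_superset (Ioc_mem_nhdsGT one_pos) hseg)

theorem Fintype.sum_update_sub {ι E M : Type*} [Fintype ι] [DecidableEq ι] [AddGroup E]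
    [AddCommMonoid M] (f : ι → E → M) (hf : ∀ j, f j 0 = 0) (x : ι → E) (i : ι) (z : E) :
    ∑ j, f j (Function.update x i z j - x j) = f i (z - x i) :=
  (Fintype.sum_eq_single i fun j hj => by simp [Function.update_of_ne hj, hf]).trans
    (by simp)

section BattlingInfluencers

variable {d n : ℕ} (w0 : ℝ) (x0 : EuclideanSpace ℝ (Fin d)) (w : Fin n → ℝ)
  (t : Fin n → EuclideanSpace ℝ (Fin d))

/-- `∇_j φ(x)`, the gradient of the potential in the action of player `j`. -/
def potentialGrad (x : Fin n → EuclideanSpace ℝ (Fin d)) (j : Fin n) :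
    EuclideanSpace ℝ (Fin d) :=
  (2 * w j) • (w0 • x0 + ∑ k, w k • x k - t j)

theorem potential_sub_potential (x y : Fin n → EuclideanSpace ℝ (Fin d)) :
    potential w0 x0 w t y - potential w0 x0 w t x =
      ‖∑ j, w j • (y j - x j)‖ ^ 2 + ∑ j, ⟪potentialGrad w0 x0 w t x j, y j - x j⟫ := by
  set S := w0 • x0 + ∑ j, w j • x j
  set u := ∑ j, w j • (y j - x j)
  have hy : w0 • x0 + ∑ j, w j • y j = S + u := by
    simp only [S, u, smul_sub, Finset.sum_sub_distrib]
    abel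
  have hSu : ⟪S, u⟫ = ∑ j, w j * ⟪S, y j - x j⟫ := by
    simp only [u, inner_sum, real_inner_smul_right]
  have hgrad : ∑ j, ⟪potentialGrad w0 x0 w t x j, y j - x j⟫ =
      2 * ∑ j, w j * ⟪S, y j - x j⟫ - 2 * ∑ j, w j * ⟪t j, y j⟫ + 2 * ∑ j, w j * ⟪t j, x j⟫ := by
    simp only [potentialGrad, real_inner_smul_left, inner_sub_left, inner_sub_right,
      Finset.mul_sum, ← Finset.sum_sub_distrib, ← Finset.sum_add_distrib]
    exact Finset.sum_congr rfl fun j _ => by ring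
  rw [potential, potential, hy, norm_add_sq_real, hSu, hgrad]
  ring

theorem loss_update_sub_loss (x : Fin n → EuclideanSpace ℝ (Fin d)) (i : Fin n)
    (z : EuclideanSpace ℝ (Fin d)) :
    loss w0 x0 w t i (Function.update x i z) - loss w0 x0 w t i x =
      ‖w i • (z - x i)‖ ^ 2 + ⟪potentialGrad w0 x0 w t x i, z - x i⟫ := by
  set S := w0 • x0 + ∑ j, w j • x j
  have hz : w0 • x0 + ∑ j, w j • Function.update x i z j - t i =
      (S - t i) + w i • (z - x i) := by
    rw [← Fintype.sum_update_sub (fun j v => w j • v) (fun _ => smul_zero _)]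
    simp only [S, smul_sub, Finset.sum_sub_distrib]
    abel
  rw [loss, loss, hz, norm_add_sq_real, potentialGrad, real_inner_smul_left,
    real_inner_smul_right]
  ring

theorem potential_update_sub_potential (x : Fin n → EuclideanSpace ℝ (Fin d)) (i : Fin n)
    (z : EuclideanSpace ℝ (Fin d)) :
    potential w0 x0 w t (Function.update x i z) - potential w0 x0 w t x =
      loss w0 x0 w t i (Function.update x i z) - loss w0 x0 w t i x := by
  rw [potential_sub_potential, loss_update_sub_loss,
    Fintype.sum_update_sub (fun j v => w j • v) (fun _ => smul_zero _),
    Fintype.sum_update_sub (fun j v => ⟪potentialGrad w0 x0 w t x j, v⟫)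
      (fun _ => inner_zero_right _)]

theorem isPureNE_iff_forall_potential_le_update {X : Set (EuclideanSpace ℝ (Fin d))}
    {x : Fin n → EuclideanSpace ℝ (Fin d)} (hx : ∀ i, x i ∈ X) :
    IsPureNE X w0 x0 w t x ↔
      ∀ i, ∀ z ∈ X, potential w0 x0 w t x ≤ potential w0 x0 w t (Function.update x i z) := by
  refine (and_iff_right hx).trans (forall_congr' fun i => forall₂_congr fun z _ => ?_)
  rw [← sub_nonneg, ← potential_update_sub_potential, sub_nonneg]

theorem potential_le_of_forall_potential_le_update {X : Set (EuclideanSpace ℝ (Fin d))}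
    (hX : Convex ℝ X) {x : Fin n → EuclideanSpace ℝ (Fin d)} (hx : ∀ i, x i ∈ X)
    (h : ∀ i, ∀ z ∈ X, potential w0 x0 w t x ≤ potential w0 x0 w t (Function.update x i z))
    {y : Fin n → EuclideanSpace ℝ (Fin d)} (hy : ∀ i, y i ∈ X) :
    potential w0 x0 w t x ≤ potential w0 x0 w t y := by
  have first_order : ∀ i, 0 ≤ ⟪potentialGrad w0 x0 w t x i, y i - x i⟫ := by
    refine fun i => hX.inner_sub_nonneg_of_forall_quadratic_nonneg (hx i) (w i ^ 2) _
      (fun z hz => ?_) (y i) (hy i)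
    have hi := sub_nonneg.2 (h i z hz)
    rwa [potential_update_sub_potential, loss_update_sub_loss, norm_smul, mul_pow,
      Real.norm_eq_abs, sq_abs] at hi
  rw [← sub_nonneg, potential_sub_potential]
  exact add_nonneg (sq_nonneg _) (Finset.sum_nonneg fun i _ => first_order i)

end BattlingInfluencers

/-- For convex `𝒳`, a profile in `𝒳^n` is a pure Nash equilibrium of the
Battling Influencers Game iff it minimizes the potential `φ` over `𝒳^n`. -/
theorem pNE_iff_min_potential {d n : ℕ} (X : Set (EuclideanSpace ℝ (Fin d)))
    (hX : Convex ℝ X) (w0 : ℝ) (x0 : EuclideanSpace ℝ (Fin d)) (w : Fin n → ℝ)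
    (t : Fin n → EuclideanSpace ℝ (Fin d))
    (x : Fin n → EuclideanSpace ℝ (Fin d)) (hx : ∀ i, x i ∈ X) :
    IsPureNE X w0 x0 w t x ↔
      ∀ y : Fin n → EuclideanSpace ℝ (Fin d), (∀ i, y i ∈ X) →
        potential w0 x0 w t x ≤ potential w0 x0 w t y := by
  rw [isPureNE_iff_forall_potential_le_update w0 x0 w t hx]
  refine ⟨fun h _ => potential_le_of_forall_potential_le_update w0 x0 w t hX hx h,
    fun h i z hz => h _ ?_⟩
  exact (Function.forall_update_iff x fun _ v => v ∈ X).2 ⟨hz, fun j _ => hx j⟩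

end
end

section
/- If the common action set 𝒳 ⊆ ℝ^d is convex, then the set of pure Nash equilibria of the Battling Influencers Game is a convex subset of (ℝ^d)^n: if x and x' are pure Nash equilibria and λ ∈ [0,1], then λx + (1−λ)x' is also a pure Nash equilibrium. -/
open scoped RealInnerProductSpace

noncomputable section

lemma sum_smul_update {d n : ℕ} (w : Fin n → ℝ)
    (x : Fin n → EuclideanSpace ℝ (Fin d)) (i : Fin n) (y : EuclideanSpace ℝ (Fin d)) :
    (∑ j, w j • Function.update x i y j)
      = (∑ j, w j • x j) + w i • (y - x i) := by
  have h : (∑ j, w j • Function.update x i y j) - (∑ j, w j • x j)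
      = w i • (y - x i) := by
    rw [← Finset.sum_sub_distrib, Finset.sum_eq_single i]
    · simp [smul_sub]
    · intro b _ hb; simp [Function.update_of_ne hb]
    · simp
  linear_combination (norm := module) h

lemma loss_update {d n : ℕ} (w0 : ℝ) (x0 : EuclideanSpace ℝ (Fin d)) (w : Fin n → ℝ)
    (t : Fin n → EuclideanSpace ℝ (Fin d)) (i : Fin n)
    (x : Fin n → EuclideanSpace ℝ (Fin d)) (y : EuclideanSpace ℝ (Fin d)) :
    loss w0 x0 w t i (Function.update x i y)
      = ‖(w0 • x0 + (∑ j, w j • x j) - t i) + w i • (y - x i)‖ ^ 2 := by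
  unfold loss
  rw [sum_smul_update]
  have h : w0 • x0 + ((∑ j, w j • x j) + w i • (y - x i)) - t i
      = (w0 • x0 + (∑ j, w j • x j) - t i) + w i • (y - x i) := by module
  rw [h]

lemma real_eps_aux (a b : ℝ) (h : ∀ ε : ℝ, 0 < ε → ε ≤ 1 → 0 ≤ 2 * (ε * a) + ε ^ 2 * b) :
    0 ≤ a := by
  by_contra h'
  push_neg at h'
  rcases le_or_gt b 0 with hb | hb
  · have := h 1 one_pos le_rfl; nlinarith
  · have hab : 0 < -a / b := div_pos (by linarith) hb
    have hε : 0 < min 1 (-a / b) := lt_min one_pos hab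
    have h1 := h _ hε (min_le_left _ _)
    have h2 : min 1 (-a / b) ≤ -a / b := min_le_right _ _
    have h3 : min 1 (-a / b) * b ≤ -a := by
      have := mul_le_mul_of_nonneg_right h2 hb.le
      rwa [div_mul_cancel₀ _ hb.ne'] at this
    nlinarith [mul_le_mul_of_nonneg_left h3 hε.le, mul_pos hε (neg_pos.mpr h')]

/-- Variational inequality from NE. -/
lemma VI_of_NE {d n : ℕ} {X : Set (EuclideanSpace ℝ (Fin d))} (hX : Convex ℝ X)
    {w0 : ℝ} {x0 : EuclideanSpace ℝ (Fin d)} {w : Fin n → ℝ}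
    {t : Fin n → EuclideanSpace ℝ (Fin d)} {x : Fin n → EuclideanSpace ℝ (Fin d)}
    (hx : IsPureNE X w0 x0 w t x) (i : Fin n) {y : EuclideanSpace ℝ (Fin d)} (hy : y ∈ X) :
    0 ≤ ⟪w0 • x0 + (∑ j, w j • x j) - t i, w i • (y - x i)⟫ := by
  set a := w0 • x0 + (∑ j, w j • x j) - t i with ha
  set v := w i • (y - x i) with hv
  apply real_eps_aux _ (‖v‖ ^ 2)
  intro ε hε hε1
  have hyε : x i + ε • (y - x i) ∈ X := by
    have := hX (hx.1 i) hy (by linarith : (0:ℝ) ≤ 1 - ε) hε.le (by ring)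
    convert this using 1
    module
  have hne := hx.2 i _ hyε
  rw [loss_update] at hne
  have hloss : loss w0 x0 w t i x = ‖a‖ ^ 2 := rfl
  have hkey : w i • (x i + ε • (y - x i) - x i) = ε • v := by
    rw [hv]; module
  rw [hloss, hkey, ← ha] at hne
  have hexp : ‖a + ε • v‖ ^ 2 = ‖a‖ ^ 2 + 2 * ⟪a, ε • v⟫ + ‖ε • v‖ ^ 2 :=
    norm_add_sq_real a (ε • v)
  rw [hexp, real_inner_smul_right, norm_smul] at hne
  have habs : ‖ε‖ = ε := by rw [Real.norm_eq_abs, abs_of_pos hε]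
  rw [habs] at hne
  nlinarith

/-- NE from variational inequality. -/
lemma NE_of_VI {d n : ℕ} {X : Set (EuclideanSpace ℝ (Fin d))}
    {w0 : ℝ} {x0 : EuclideanSpace ℝ (Fin d)} {w : Fin n → ℝ}
    {t : Fin n → EuclideanSpace ℝ (Fin d)} {x : Fin n → EuclideanSpace ℝ (Fin d)}
    (hxX : ∀ i, x i ∈ X)
    (hVI : ∀ i, ∀ y ∈ X, 0 ≤ ⟪w0 • x0 + (∑ j, w j • x j) - t i, w i • (y - x i)⟫) :
    IsPureNE X w0 x0 w t x := by
  refine ⟨hxX, fun i y hy => ?_⟩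
  rw [loss_update]
  set a := w0 • x0 + (∑ j, w j • x j) - t i with ha
  set v := w i • (y - x i) with hv
  have hexp : ‖a + v‖ ^ 2 = ‖a‖ ^ 2 + 2 * ⟪a, v⟫ + ‖v‖ ^ 2 := norm_add_sq_real a v
  have hloss : loss w0 x0 w t i x = ‖a‖ ^ 2 := rfl
  rw [hloss, hexp]
  have := hVI i y hy
  rw [← ha, ← hv] at this
  nlinarith [sq_nonneg ‖v‖]

/-- If the common action set `𝒳` is convex then the set of pure Nash equilibria
of the Battling Influencers Game is convex: any convex combination of two pure
Nash equilibria is again a pure Nash equilibrium. -/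
theorem pNE_convex {d n : ℕ} (X : Set (EuclideanSpace ℝ (Fin d)))
    (hX : Convex ℝ X) (w0 : ℝ) (x0 : EuclideanSpace ℝ (Fin d)) (w : Fin n → ℝ)
    (t : Fin n → EuclideanSpace ℝ (Fin d))
    (x x' : Fin n → EuclideanSpace ℝ (Fin d))
    (hx : IsPureNE X w0 x0 w t x) (hx' : IsPureNE X w0 x0 w t x')
    (l : ℝ) (hl : l ∈ Set.Icc (0 : ℝ) 1) :
    IsPureNE X w0 x0 w t (fun i => l • x i + (1 - l) • x' i) := by
  obtain ⟨hl0, hl1⟩ := hl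
  -- the aggregate difference D is zero
  have hsum : (∑ j, w j • (x j - x' j)) = (∑ j, w j • x j) - (∑ j, w j • x' j) := by
    rw [← Finset.sum_sub_distrib]
    exact Finset.sum_congr rfl fun j _ => smul_sub _ _ _
  set D : EuclideanSpace ℝ (Fin d) := (∑ j, w j • x j) - (∑ j, w j • x' j) with hD
  have hDzero : D = 0 := by
    have hnn : ⟪D, D⟫ ≤ 0 := by
      have : ⟪D, D⟫ = ∑ j, ⟪D, w j • (x j - x' j)⟫ := by
        rw [← inner_sum, hsum]
      rw [this]
      apply Finset.sum_nonpos
      intro j _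
      have h1 : 0 ≤ ⟪w0 • x0 + (∑ k, w k • x k) - t j, w j • (x' j - x j)⟫ :=
        VI_of_NE hX hx j (hx'.1 j)
      have h2 : 0 ≤ ⟪w0 • x0 + (∑ k, w k • x' k) - t j, w j • (x j - x' j)⟫ :=
        VI_of_NE hX hx' j (hx.1 j)
      have hsplit : ⟪D, w j • (x j - x' j)⟫
          = -⟪w0 • x0 + (∑ k, w k • x k) - t j, w j • (x' j - x j)⟫
            - ⟪w0 • x0 + (∑ k, w k • x' k) - t j, w j • (x j - x' j)⟫ := by
        have hDeq : D = (w0 • x0 + (∑ k, w k • x k) - t j)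
            - (w0 • x0 + (∑ k, w k • x' k) - t j) := by rw [hD]; module
        rw [hDeq, inner_sub_left]
        have : w j • (x' j - x j) = -(w j • (x j - x' j)) := by module
        rw [this, inner_neg_right]
        ring
      rw [hsplit]
      linarith
    have : ‖D‖ ^ 2 ≤ 0 := by rwa [← real_inner_self_eq_norm_sq]
    have hn : ‖D‖ = 0 := by nlinarith [norm_nonneg D, sq_nonneg ‖D‖]
    exact norm_eq_zero.mp hn
  have hSeq : (∑ j, w j • x' j) = (∑ j, w j • x j) := by
    have := sub_eq_zero.mp hDzero
    exact this.symm
  -- membership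
  have hzX : ∀ i, l • x i + (1 - l) • x' i ∈ X := fun i =>
    hX (hx.1 i) (hx'.1 i) hl0 (by linarith) (by ring)
  apply NE_of_VI hzX
  intro i y hy
  -- sum for z
  have hzsum : (∑ j, w j • (l • x j + (1 - l) • x' j))
      = l • (∑ j, w j • x j) + (1 - l) • (∑ j, w j • x' j) := by
    rw [Finset.smul_sum, Finset.smul_sum, ← Finset.sum_add_distrib]
    exact Finset.sum_congr rfl fun j _ => by module
  have haz : w0 • x0 + (∑ j, w j • (l • x j + (1 - l) • x' j)) - t i
      = w0 • x0 + (∑ j, w j • x j) - t i := by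
    rw [hzsum, hSeq]; module
  rw [haz]
  have hvz : w i • (y - (l • x i + (1 - l) • x' i))
      = l • (w i • (y - x i)) + (1 - l) • (w i • (y - x' i)) := by module
  have h1 : 0 ≤ ⟪w0 • x0 + (∑ j, w j • x j) - t i, w i • (y - x i)⟫ :=
    VI_of_NE hX hx i hy
  have h2 : 0 ≤ ⟪w0 • x0 + (∑ j, w j • x' j) - t i, w i • (y - x' i)⟫ :=
    VI_of_NE hX hx' i hy
  rw [hSeq] at h2
  rw [hvz]
  simp only [inner_add_right, real_inner_smul_right] at h1 h2 ⊢
  have := mul_nonneg hl0 h1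
  have := mul_nonneg (by linarith : (0:ℝ) ≤ 1 - l) h2
  linarith


end
end

section
/- Suppose d ≥ 1 and the common action set 𝒳 ⊆ ℝ^d is convex. If the Battling Influencers Game has two distinct pure Nash equilibria, then it has infinitely many pure Nash equilibria. Consequently, when 𝒳 is in addition nonempty and compact, the game has either exactly one pure Nash equilibrium or infinitely many. -/
open scoped RealInnerProductSpace

noncomputable section

namespace BIGaux

variable {d n : ℕ}

/-- aggregate point -/
def agg (w0 : ℝ) (x0 : EuclideanSpace ℝ (Fin d)) (w : Fin n → ℝ)
    (x : Fin n → EuclideanSpace ℝ (Fin d)) : EuclideanSpace ℝ (Fin d) :=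
  w0 • x0 + ∑ j, w j • x j

variable (w0 : ℝ) (x0 : EuclideanSpace ℝ (Fin d)) (w : Fin n → ℝ)
  (t : Fin n → EuclideanSpace ℝ (Fin d))

lemma loss_eq (i : Fin n) (x : Fin n → EuclideanSpace ℝ (Fin d)) :
    loss w0 x0 w t i x = ‖agg w0 x0 w x - t i‖ ^ 2 := rfl

lemma agg_update (x : Fin n → EuclideanSpace ℝ (Fin d)) (i : Fin n)
    (y : EuclideanSpace ℝ (Fin d)) :
    agg w0 x0 w (Function.update x i y) = agg w0 x0 w x + w i • (y - x i) := by
  have h : (∑ j, w j • Function.update x i y j) - ∑ j, w j • x j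
      = w i • (y - x i) := by
    rw [← Finset.sum_sub_distrib]
    rw [Finset.sum_eq_single i]
    · simp [smul_sub]
    · intro j _ hj; simp [Function.update_of_ne hj]
    · simp
  unfold agg
  rw [add_assoc]
  congr 1
  rw [← h]; abel

lemma loss_update (x : Fin n → EuclideanSpace ℝ (Fin d)) (i : Fin n)
    (y : EuclideanSpace ℝ (Fin d)) :
    loss w0 x0 w t i (Function.update x i y)
      = loss w0 x0 w t i x
        + 2 * ⟪agg w0 x0 w x - t i, w i • (y - x i)⟫
        + ‖w i • (y - x i)‖ ^ 2 := by
  rw [loss_eq, loss_eq, agg_update]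
  rw [show agg w0 x0 w x + w i • (y - x i) - t i
      = (agg w0 x0 w x - t i) + w i • (y - x i) by abel]
  rw [norm_add_sq_real]

/-- Variational inequality from NE. -/
lemma vi_of_ne {X : Set (EuclideanSpace ℝ (Fin d))} (hcvx : Convex ℝ X)
    {x : Fin n → EuclideanSpace ℝ (Fin d)} (hx : IsPureNE X w0 x0 w t x)
    (i : Fin n) {y : EuclideanSpace ℝ (Fin d)} (hy : y ∈ X) :
    0 ≤ ⟪agg w0 x0 w x - t i, w i • (y - x i)⟫ := by
  by_contra hneg
  push_neg at hneg
  set a := agg w0 x0 w x - t i with ha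
  set v := w i • (y - x i) with hv
  have hvne : v ≠ 0 := by
    intro h; rw [h] at hneg; simp at hneg
  have hvpos : 0 < ‖v‖ ^ 2 := pow_pos (norm_pos_iff.mpr hvne) 2
  set ε : ℝ := min 1 (-⟪a, v⟫ / ‖v‖ ^ 2) with hε
  have hε0 : 0 < ε := lt_min one_pos (div_pos (by linarith) hvpos)
  have hε1 : ε ≤ 1 := min_le_left _ _
  have hε2 : ε * ‖v‖ ^ 2 ≤ -⟪a, v⟫ := by
    have := min_le_right 1 (-⟪a, v⟫ / ‖v‖ ^ 2)
    calc ε * ‖v‖ ^ 2 ≤ (-⟪a, v⟫ / ‖v‖ ^ 2) * ‖v‖ ^ 2 := by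
          apply mul_le_mul_of_nonneg_right this (le_of_lt hvpos)
      _ = -⟪a, v⟫ := by field_simp
  set y' := x i + ε • (y - x i) with hy'
  have hy'X : y' ∈ X := by
    have : y' = (1 - ε) • x i + ε • y := by
      rw [hy']; module
    rw [this]
    exact hcvx (hx.1 i) hy (by linarith) (le_of_lt hε0) (by ring)
  have hkey := hx.2 i y' hy'X
  rw [loss_update] at hkey
  have hveq : w i • (y' - x i) = ε • v := by
    rw [hy', hv]; module
  rw [hveq] at hkey
  rw [real_inner_smul_right, norm_smul, Real.norm_eq_abs, abs_of_pos hε0] at hkey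
  have : 0 ≤ 2 * (ε * ⟪a, v⟫) + ε * (ε * ‖v‖ ^ 2) := by nlinarith
  nlinarith [mul_le_mul_of_nonneg_left hε2 (le_of_lt hε0),
    mul_neg_of_pos_of_neg hε0 hneg]

/-- NE from the variational inequality. -/
lemma ne_of_vi {X : Set (EuclideanSpace ℝ (Fin d))}
    {x : Fin n → EuclideanSpace ℝ (Fin d)} (hmem : ∀ i, x i ∈ X)
    (hvi : ∀ i, ∀ y ∈ X, 0 ≤ ⟪agg w0 x0 w x - t i, w i • (y - x i)⟫) :
    IsPureNE X w0 x0 w t x := by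
  refine ⟨hmem, fun i y hy => ?_⟩
  rw [loss_update]
  have h1 := hvi i y hy
  have h2 : (0:ℝ) ≤ ‖w i • (y - x i)‖ ^ 2 := by positivity
  linarith

/-- All NE share the same aggregate. -/
lemma agg_eq_agg {X : Set (EuclideanSpace ℝ (Fin d))} (hcvx : Convex ℝ X)
    {x x' : Fin n → EuclideanSpace ℝ (Fin d)}
    (hx : IsPureNE X w0 x0 w t x) (hx' : IsPureNE X w0 x0 w t x') :
    agg w0 x0 w x = agg w0 x0 w x' := by
  set s := agg w0 x0 w x with hs
  set s' := agg w0 x0 w x' with hs'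
  have hsum : 0 ≤ ∑ i, (⟪s - t i, w i • (x' i - x i)⟫
      + ⟪s' - t i, w i • (x i - x' i)⟫) := by
    apply Finset.sum_nonneg
    intro i _
    have h1 := vi_of_ne w0 x0 w t hcvx hx i (hx'.1 i)
    have h2 := vi_of_ne w0 x0 w t hcvx hx' i (hx.1 i)
    linarith
  have hterm : ∀ i : Fin n, ⟪s - t i, w i • (x' i - x i)⟫
      + ⟪s' - t i, w i • (x i - x' i)⟫
      = ⟪s - s', w i • (x' i - x i)⟫ := by
    intro i
    have : w i • (x i - x' i) = -(w i • (x' i - x i)) := by module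
    rw [this, inner_neg_right, inner_sub_left, inner_sub_left, inner_sub_left]
    ring
  rw [Finset.sum_congr rfl (fun i _ => hterm i), ← inner_sum] at hsum
  have hdiff : (∑ i, w i • (x' i - x i)) = s' - s := by
    rw [hs, hs', agg, agg]
    rw [Finset.sum_congr rfl (fun i _ => smul_sub (w i) (x' i) (x i)),
      Finset.sum_sub_distrib]
    abel
  rw [hdiff] at hsum
  have : ⟪s - s', s' - s⟫ = -‖s - s'‖ ^ 2 := by
    rw [show s' - s = -(s - s') by abel, inner_neg_right,
      real_inner_self_eq_norm_sq]
  rw [this] at hsum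
  have : ‖s - s'‖ ^ 2 ≤ 0 := by linarith
  have : s - s' = 0 := by
    have := pow_eq_zero_iff (n := 2) (by norm_num) |>.mp
      (le_antisymm this (by positivity))
    exact norm_eq_zero.mp this
  exact sub_eq_zero.mp this

/-- Convex combinations of NE are NE. -/
lemma ne_combo {X : Set (EuclideanSpace ℝ (Fin d))} (hcvx : Convex ℝ X)
    {x x' : Fin n → EuclideanSpace ℝ (Fin d)}
    (hx : IsPureNE X w0 x0 w t x) (hx' : IsPureNE X w0 x0 w t x')
    {lam : ℝ} (h0 : 0 ≤ lam) (h1 : lam ≤ 1) :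
    IsPureNE X w0 x0 w t (fun i => lam • x i + (1 - lam) • x' i) := by
  set z : Fin n → EuclideanSpace ℝ (Fin d) :=
    fun i => lam • x i + (1 - lam) • x' i with hz
  have haggeq := agg_eq_agg w0 x0 w t hcvx hx hx'
  have haggz : agg w0 x0 w z = agg w0 x0 w x := by
    rw [agg, agg]
    have : (∑ j, w j • z j) = lam • (∑ j, w j • x j)
        + (1 - lam) • (∑ j, w j • x' j) := by
      rw [Finset.smul_sum, Finset.smul_sum, ← Finset.sum_add_distrib]
      apply Finset.sum_congr rfl
      intro j _
      rw [hz]; simp only; module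
    rw [this]
    have hx2 : (∑ j, w j • x' j) = (∑ j, w j • x j) + (agg w0 x0 w x' - agg w0 x0 w x) := by
      rw [agg, agg]; abel
    rw [hx2, ← haggeq]
    module
  apply ne_of_vi
  · intro i
    exact hcvx (hx.1 i) (hx'.1 i) h0 (by linarith) (by ring)
  · intro i y hy
    have hv : w i • (y - z i) = lam • (w i • (y - x i))
        + (1 - lam) • (w i • (y - x' i)) := by
      rw [hz]; simp only; module
    rw [haggz, hv, inner_add_right]
    have h1' := vi_of_ne w0 x0 w t hcvx hx i hy
    have h2' := vi_of_ne w0 x0 w t hcvx hx' i hy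
    rw [← haggeq] at h2'
    simp only [real_inner_smul_right] at h1' h2' ⊢
    have := mul_nonneg h0 h1'
    have := mul_nonneg (by linarith : (0:ℝ) ≤ 1 - lam) h2'
    linarith

end BIGaux

namespace BIGaux

variable {d n : ℕ} (w0 : ℝ) (x0 : EuclideanSpace ℝ (Fin d)) (w : Fin n → ℝ)
  (t : Fin n → EuclideanSpace ℝ (Fin d))

/-- Exact potential of the game. -/
def pot (x : Fin n → EuclideanSpace ℝ (Fin d)) : ℝ :=
  ‖agg w0 x0 w x‖ ^ 2 - 2 * ∑ j, w j * ⟪x j, t j⟫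

lemma loss_sub_pot (x : Fin n → EuclideanSpace ℝ (Fin d)) (i : Fin n)
    (y : EuclideanSpace ℝ (Fin d)) :
    loss w0 x0 w t i (Function.update x i y) - loss w0 x0 w t i x
      = pot w0 x0 w t (Function.update x i y) - pot w0 x0 w t x := by
  have hL : ∀ u : Fin n → EuclideanSpace ℝ (Fin d),
      loss w0 x0 w t i u = ‖agg w0 x0 w u‖ ^ 2 - 2 * ⟪agg w0 x0 w u, t i⟫
        + ‖t i‖ ^ 2 := by
    intro u
    rw [loss_eq, norm_sub_sq_real]
  set u := Function.update x i y with hu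
  have hsum : (∑ j, w j * ⟪u j, t j⟫) - ∑ j, w j * ⟪x j, t j⟫
      = ⟪agg w0 x0 w u - agg w0 x0 w x, t i⟫ := by
    rw [← Finset.sum_sub_distrib]
    rw [Finset.sum_eq_single i]
    · rw [hu, agg_update]
      have : agg w0 x0 w x + w i • (y - x i) - agg w0 x0 w x
          = w i • (y - x i) := by abel
      rw [this, real_inner_smul_left, inner_sub_left, Function.update_self]
      ring
    · intro j _ hj
      rw [hu, Function.update_of_ne hj]; ring
    · simp
  rw [hL u, hL x, pot, pot]
  have h2 : ⟪agg w0 x0 w u, t i⟫ - ⟪agg w0 x0 w x, t i⟫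
      = ⟪agg w0 x0 w u - agg w0 x0 w x, t i⟫ := by
    rw [inner_sub_left]
  rw [← hsum] at h2
  linarith [h2]

lemma cont_pot : Continuous (pot w0 x0 w t) := by
  have hagg : Continuous (agg w0 x0 w (n := n)) := by
    apply Continuous.add continuous_const
    exact continuous_finset_sum _ fun j _ => (continuous_apply j).const_smul (w j)
  apply Continuous.sub
  · exact (hagg.norm.pow 2)
  · apply Continuous.mul continuous_const
    exact continuous_finset_sum _ fun j _ =>
      continuous_const.mul ((continuous_apply j).inner continuous_const)

lemma exists_ne {X : Set (EuclideanSpace ℝ (Fin d))}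
    (hne : X.Nonempty) (hcomp : IsCompact X) :
    ∃ x : Fin n → EuclideanSpace ℝ (Fin d), IsPureNE X w0 x0 w t x := by
  set K : Set (Fin n → EuclideanSpace ℝ (Fin d)) :=
    Set.univ.pi (fun _ => X) with hK
  have hKc : IsCompact K := isCompact_univ_pi fun _ => hcomp
  obtain ⟨p, hp⟩ := hne
  have hKne : K.Nonempty := ⟨fun _ => p, fun i _ => hp⟩
  obtain ⟨z, hzK, hmin⟩ :=
    hKc.exists_isMinOn hKne (cont_pot w0 x0 w t).continuousOn
  have hzX : ∀ i, z i ∈ X := fun i => hzK i (Set.mem_univ i)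
  refine ⟨z, hzX, fun i y hy => ?_⟩
  have huK : Function.update z i y ∈ K := by
    intro j _
    rcases eq_or_ne j i with rfl | hji
    · simpa using hy
    · simpa [Function.update_of_ne hji] using hzX j
  have := hmin huK
  have hps := loss_sub_pot w0 x0 w t z i y
  simp only [IsMinOn, Set.mem_setOf_eq] at this
  linarith [hps, this]

end BIGaux

/-- For `d ≥ 1` and convex `𝒳`: (i) if the Battling Influencers Game has two
distinct pure Nash equilibria then it has infinitely many; (ii) consequently,
if `𝒳` is in addition nonempty and compact, the game has either exactly one
pure Nash equilibrium or infinitely many. -/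
theorem pNE_one_or_infinite {d n : ℕ} (hd : 1 ≤ d)
    (X : Set (EuclideanSpace ℝ (Fin d))) (hcvx : Convex ℝ X)
    (w0 : ℝ) (x0 : EuclideanSpace ℝ (Fin d)) (w : Fin n → ℝ)
    (t : Fin n → EuclideanSpace ℝ (Fin d)) :
    (∀ x x' : Fin n → EuclideanSpace ℝ (Fin d),
        IsPureNE X w0 x0 w t x → IsPureNE X w0 x0 w t x' → x ≠ x' →
        {y | IsPureNE X w0 x0 w t y}.Infinite) ∧
      (X.Nonempty → IsCompact X →
        (∃! y : Fin n → EuclideanSpace ℝ (Fin d), IsPureNE X w0 x0 w t y) ∨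
          {y | IsPureNE X w0 x0 w t y}.Infinite) := by
  have hpart1 : ∀ x x' : Fin n → EuclideanSpace ℝ (Fin d),
      IsPureNE X w0 x0 w t x → IsPureNE X w0 x0 w t x' → x ≠ x' →
      {y | IsPureNE X w0 x0 w t y}.Infinite := by
    intro x x' hx hx' hxx'
    obtain ⟨i0, hi0⟩ := Function.ne_iff.mp hxx'
    set f : ℝ → (Fin n → EuclideanSpace ℝ (Fin d)) :=
      fun lam => fun i => lam • x i + (1 - lam) • x' i with hf
    have hinj : Set.InjOn f (Set.Icc (0:ℝ) 1) := by
      intro a _ b _ hab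
      have h := congrFun hab i0
      simp only [hf] at h
      have h2 : (a - b) • (x i0 - x' i0) = 0 := by
        have : (a - b) • (x i0 - x' i0)
            = (a • x i0 + (1 - a) • x' i0) - (b • x i0 + (1 - b) • x' i0) := by
          module
        rw [this, h, sub_self]
      rcases smul_eq_zero.mp h2 with h3 | h3
      · linarith [sub_eq_zero.mp (by exact_mod_cast h3)]
      · exact absurd (sub_eq_zero.mp h3) hi0
    have hIccInf : (Set.Icc (0:ℝ) 1).Infinite :=
      Set.Icc_infinite (by norm_num)
    have himg : (f '' Set.Icc (0:ℝ) 1).Infinite := hIccInf.image hinj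
    apply himg.mono
    rintro _ ⟨lam, hlam, rfl⟩
    exact BIGaux.ne_combo w0 x0 w t hcvx hx hx' hlam.1 hlam.2
  refine ⟨hpart1, fun hne hcomp => ?_⟩
  obtain ⟨z, hz⟩ := BIGaux.exists_ne w0 x0 w t hne hcomp
  by_cases h : ∀ y, IsPureNE X w0 x0 w t y → y = z
  · exact Or.inl ⟨z, hz, h⟩
  · push_neg at h
    obtain ⟨y, hy, hyz⟩ := h
    exact Or.inr (hpart1 y z hy hz hyz)

end
end

section
/- Fix a player i ∈ {1,...,n} and fix the other players' actions x_{−i} ∈ (ℝ^d)^{n−1}. Then for any set 𝒳 ⊆ ℝ^d and any y ∈ 𝒳: y minimizes x_i ↦ ℓ_i(x_i, x_{−i}) over 𝒳 if and only if y minimizes x_i ↦ φ(x_i, x_{−i}) over 𝒳. That is, argmin_{x_i ∈ 𝒳} φ(x_i, x_{−i}) = argmin_{x_i ∈ 𝒳} ℓ_i(x_i, x_{−i}). -/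
open scoped RealInnerProductSpace

noncomputable section

lemma loss_sub_potential_const {d n : ℕ} (w0 : ℝ) (x0 : EuclideanSpace ℝ (Fin d))
    (w : Fin n → ℝ) (t : Fin n → EuclideanSpace ℝ (Fin d)) (i : Fin n)
    (x : Fin n → EuclideanSpace ℝ (Fin d)) (z : EuclideanSpace ℝ (Fin d)) :
    loss w0 x0 w t i (Function.update x i z)
      - potential w0 x0 w t (Function.update x i z)
    = ‖t i‖ ^ 2 - 2 * ⟪w0 • x0, t i⟫
        + 2 * ∑ j ∈ Finset.univ.erase i, w j * ⟪t j - t i, x j⟫ := by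
  unfold loss potential
  have hsum : ∀ v : EuclideanSpace ℝ (Fin d),
      ⟪∑ j, w j • Function.update x i z j, v⟫
        = ∑ j, w j * ⟪Function.update x i z j, v⟫ := by
    intro v
    rw [sum_inner]
    exact Finset.sum_congr rfl fun j _ => real_inner_smul_left _ _ _
  have hexp : ‖w0 • x0 + (∑ j, w j • Function.update x i z j) - t i‖ ^ 2
      = ‖w0 • x0 + (∑ j, w j • Function.update x i z j)‖ ^ 2
        - 2 * ⟪w0 • x0 + (∑ j, w j • Function.update x i z j), t i⟫ + ‖t i‖ ^ 2 := by
    rw [norm_sub_sq_real]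
  rw [hexp, inner_add_left, hsum]
  have h1 : ∑ j, w j * ⟪Function.update x i z j, t i⟫
      = w i * ⟪z, t i⟫ + ∑ j ∈ Finset.univ.erase i, w j * ⟪x j, t i⟫ := by
    rw [← Finset.add_sum_erase _ _ (Finset.mem_univ i)]
    congr 1
    · simp
    · exact Finset.sum_congr rfl fun j hj => by
        rw [Function.update_of_ne (Finset.ne_of_mem_erase hj)]
  have h2 : ∑ j, w j * ⟪t j, Function.update x i z j⟫
      = w i * ⟪t i, z⟫ + ∑ j ∈ Finset.univ.erase i, w j * ⟪t j, x j⟫ := by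
    rw [← Finset.add_sum_erase _ _ (Finset.mem_univ i)]
    congr 1
    · simp
    · exact Finset.sum_congr rfl fun j hj => by
        rw [Function.update_of_ne (Finset.ne_of_mem_erase hj)]
  rw [h1, h2, real_inner_comm z (t i)]
  have h3 : ∑ j ∈ Finset.univ.erase i, w j * ⟪t j - t i, x j⟫
      = ∑ j ∈ Finset.univ.erase i, w j * ⟪t j, x j⟫
        - ∑ j ∈ Finset.univ.erase i, w j * ⟪t i, x j⟫ := by
    rw [← Finset.sum_sub_distrib]
    exact Finset.sum_congr rfl fun j _ => by rw [inner_sub_left]; ring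
  have h4 : ∀ j, ⟪x j, t i⟫ = ⟪t i, x j⟫ := fun j => real_inner_comm _ _
  simp only [h4] at *
  rw [h3]
  ring

/-- Fixing the other players' actions, a point `y ∈ 𝒳` minimizes player `i`'s
own loss `x_i ↦ ℓ_i(x_i, x_{−i})` over `𝒳` iff it minimizes the potential
`x_i ↦ φ(x_i, x_{−i})` over `𝒳`; i.e. the two argmin sets coincide. -/
theorem argmin_loss_eq_argmin_potential {d n : ℕ}
    (w0 : ℝ) (x0 : EuclideanSpace ℝ (Fin d)) (w : Fin n → ℝ)
    (t : Fin n → EuclideanSpace ℝ (Fin d)) (i : Fin n)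
    (x : Fin n → EuclideanSpace ℝ (Fin d))
    (X : Set (EuclideanSpace ℝ (Fin d))) (y : EuclideanSpace ℝ (Fin d))
    (hy : y ∈ X) :
    (∀ z ∈ X, loss w0 x0 w t i (Function.update x i y)
        ≤ loss w0 x0 w t i (Function.update x i z)) ↔
      (∀ z ∈ X, potential w0 x0 w t (Function.update x i y)
        ≤ potential w0 x0 w t (Function.update x i z)) := by
  constructor
  · intro h z hz
    have h1 := h z hz
    have e1 := loss_sub_potential_const w0 x0 w t i x y
    have e2 := loss_sub_potential_const w0 x0 w t i x z
    linarith
  · intro h z hz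
    have h1 := h z hz
    have e1 := loss_sub_potential_const w0 x0 w t i x y
    have e2 := loss_sub_potential_const w0 x0 w t i x z
    linarith

end
end
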